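/- arXiv:2504.12857 — 3 statements merged into one kernel-verified Lean document; each statement's English description precedes it below -/
import Mathlib

section
/- A graph G is in DH ∩ co-DH, that is, both G and its complement are distance-hereditary (every connected induced subgraph preserves distances), if and only if G contains no induced C5, House, P5, Gem, or co-Gem (K1 + P4). -/
open SimpleGraph

/-- The cycle on 5 vertices. -/
def C5 : SimpleGraph (Fin 5) := fromEdgeSet {s(0,1), s(1,2), s(2,3), s(3,4), s(4,0)}

/-- The House: a 4-cycle 0,1,2,3 plus a vertex 4 adjacent to the two adjacent vertices 0,1. -/
def House : SimpleGraph (Fin 5) := fromEdgeSet {s(0,1), s(1,2), s(2,3), s(3,0), s(0,4), s(1,4)}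

/-- The path graph on 5 vertices. -/
def P5 : SimpleGraph (Fin 5) := fromEdgeSet {s(0,1), s(1,2), s(2,3), s(3,4)}

/-- The Gem: P4 on 0,1,2,3 plus a vertex 4 adjacent to all four. -/
def Gem : SimpleGraph (Fin 5) := fromEdgeSet {s(0,1), s(1,2), s(2,3), s(0,4), s(1,4), s(2,4), s(3,4)}

/-- The co-Gem: disjoint union of P4 (on 0,1,2,3) and K1 (vertex 4). -/
def CoGem : SimpleGraph (Fin 5) := fromEdgeSet {s(0,1), s(1,2), s(2,3)}

/-- `G` contains an induced copy of `H`. -/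
def HasInducedCopy {α β : Type*} (H : SimpleGraph α) (G : SimpleGraph β) : Prop :=
  Nonempty (H ↪g G)

/-- A graph is distance-hereditary if every connected induced subgraph preserves distances. -/
def DistanceHereditary {V : Type*} (G : SimpleGraph V) : Prop :=
  ∀ s : Set V, (G.induce s).Connected → ∀ u v : s, (G.induce s).dist u v = G.dist u v

/-! ### Auxiliary machinery -/

/-- A decidable presentation of graphs on `Fin 5`. -/
def pat5 (l : List (Fin 5 × Fin 5)) : SimpleGraph (Fin 5) :=
  SimpleGraph.fromRel (fun i j => (i, j) ∈ l)

instance (l : List (Fin 5 × Fin 5)) : DecidableRel (pat5 l).Adj := fun a b =>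
  decidable_of_iff _ (SimpleGraph.fromRel_adj _ a b).symm

lemma C5_eq : C5 = pat5 [(0,1),(1,2),(2,3),(3,4),(4,0)] := by
  ext a b
  fin_cases a <;> fin_cases b <;>
    simp [C5, pat5, Sym2.eq, Sym2.rel_iff', Set.mem_insert_iff, fromRel_adj]

lemma House_eq : House = pat5 [(0,1),(1,2),(2,3),(3,0),(0,4),(1,4)] := by
  ext a b
  fin_cases a <;> fin_cases b <;>
    simp [House, pat5, Sym2.eq, Sym2.rel_iff', Set.mem_insert_iff, fromRel_adj]

lemma P5_eq : P5 = pat5 [(0,1),(1,2),(2,3),(3,4)] := by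
  ext a b
  fin_cases a <;> fin_cases b <;>
    simp [P5, pat5, Sym2.eq, Sym2.rel_iff', Set.mem_insert_iff, fromRel_adj]

lemma Gem_eq : Gem = pat5 [(0,1),(1,2),(2,3),(0,4),(1,4),(2,4),(3,4)] := by
  ext a b
  fin_cases a <;> fin_cases b <;>
    simp [Gem, pat5, Sym2.eq, Sym2.rel_iff', Set.mem_insert_iff, fromRel_adj]

lemma CoGem_eq : CoGem = pat5 [(0,1),(1,2),(2,3)] := by
  ext a b
  fin_cases a <;> fin_cases b <;>
    simp [CoGem, pat5, Sym2.eq, Sym2.rel_iff', Set.mem_insert_iff, fromRel_adj]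

section Aux

variable {V : Type*} {G : SimpleGraph V}


/-- In any graph, if two distinct non-adjacent vertices are at distance at most 2,
there is a common neighbor. -/
lemma exists_mid {W : Type*} (H : SimpleGraph W) {x y : W} (hr : H.Reachable x y)
    (h2 : H.dist x y ≤ 2) (hne : x ≠ y) (hadj : ¬H.Adj x y) :
    ∃ m, H.Adj x m ∧ H.Adj m y := by
  obtain ⟨p, hp⟩ := hr.exists_walk_length_eq_dist
  rw [← hp] at h2
  cases p with
  | nil => exact absurd rfl hne
  | cons h q =>
  cases q with
  | nil => exact absurd h hadj
  | cons h' q' =>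
  cases q' with
  | nil => exact ⟨_, h, h'⟩
  | cons h'' q'' => simp [Walk.length_cons] at h2

/-- Build an induced copy from a vertex assignment respecting the adjacency pattern,
provided no two vertices of the pattern graph have the same "neighborhood signature". -/
lemma mkCopy (F : SimpleGraph (Fin 5)) (x : Fin 5 → V)
    (htw : ∀ i j : Fin 5, i ≠ j →
      ∃ k, (F.Adj i k ∧ ¬F.Adj j k) ∨ (F.Adj j k ∧ ¬F.Adj i k))
    (h : ∀ i j, F.Adj i j → G.Adj (x i) (x j))
    (h' : ∀ i j, i ≠ j → ¬F.Adj i j → ¬G.Adj (x i) (x j)) :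
    HasInducedCopy F G := by
  have hinj : Function.Injective x := by
    intro i j hxij
    by_contra hij
    obtain ⟨k, hk⟩ := htw i j hij
    rcases hk with ⟨hik, hjk⟩ | ⟨hjk, hik⟩
    · have hG : G.Adj (x j) (x k) := hxij ▸ h i k hik
      rcases eq_or_ne j k with rfl | hjk'
      · exact hG.ne rfl
      · exact h' j k hjk' hjk hG
    · have hG : G.Adj (x i) (x k) := hxij ▸ h j k hjk
      rcases eq_or_ne i k with rfl | hik'
      · exact hG.ne rfl
      · exact h' i k hik' hik hG
  refine ⟨⟨⟨x, hinj⟩, ?_⟩⟩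
  intro i j
  simp only [Function.Embedding.coeFn_mk]
  constructor
  · intro hG
    by_contra hF
    rcases eq_or_ne i j with rfl | hij
    · exact hG.ne rfl
    · exact h' i j hij hF hG
  · exact h i j

/-- Transfer an induced copy in the complement to an induced copy (of the
complement pattern, relabelled by `σ`) in the graph itself. -/
lemma transferCompl (F F' : SimpleGraph (Fin 5)) (σ : Fin 5 → Fin 5)
    (hσ : Function.Injective σ)
    (h : ∀ i j, F'.Adj i j ↔ (σ i ≠ σ j ∧ ¬ F.Adj (σ i) (σ j))) :
    HasInducedCopy F Gᶜ → HasInducedCopy F' G := by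
  rintro ⟨f⟩
  refine ⟨⟨⟨fun i => f (σ i), fun i j hij => hσ (f.injective hij)⟩, ?_⟩⟩
  intro i j
  show G.Adj (f (σ i)) (f (σ j)) ↔ F'.Adj i j
  rw [h i j]
  constructor
  · intro hG
    refine ⟨fun hss => hG.ne (by rw [hss]), fun hF => ?_⟩
    have : Gᶜ.Adj (f (σ i)) (f (σ j)) := f.map_adj_iff.mpr hF
    exact this.2 hG
  · rintro ⟨hss, hF⟩
    have hne : f (σ i) ≠ f (σ j) := fun hh => hss (f.injective hh)
    have : ¬ Gᶜ.Adj (f (σ i)) (f (σ j)) := fun hh => hF (f.map_adj_iff.mp hh)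
    rw [compl_adj] at this
    push_neg at this
    exact this hne

/-- If `G` contains vertices `a b c d e` where `a-b-c-d` is an induced path and
`e` is adjacent to both `a` and `d`, then `G` is not distance-hereditary. -/
lemma notDH (a b c d e : V) (h1 : G.Adj a b) (h2 : G.Adj b c) (h3 : G.Adj c d)
    (hac : ¬G.Adj a c) (had : ¬G.Adj a d) (hbd : ¬G.Adj b d) (hadne : a ≠ d)
    (hae : G.Adj a e) (hed : G.Adj e d) : ¬ DistanceHereditary G := by
  intro hdh
  set s : Set V := {a, b, c, d} with hs
  have ha : a ∈ s := by simp [hs]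
  have hb : b ∈ s := by simp [hs]
  have hc : c ∈ s := by simp [hs]
  have hd : d ∈ s := by simp [hs]
  set A : s := ⟨a, ha⟩
  set B : s := ⟨b, hb⟩
  set C : s := ⟨c, hc⟩
  set D : s := ⟨d, hd⟩
  have iadj : ∀ x y : s, (G.induce s).Adj x y ↔ G.Adj x.val y.val := fun x y => Iff.rfl
  have e1 : (G.induce s).Adj A B := h1
  have e2 : (G.induce s).Adj B C := h2
  have e3 : (G.induce s).Adj C D := h3
  have hconn : (G.induce s).Connected := by
    rw [connected_iff]
    refine ⟨?_, ⟨A⟩⟩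
    have hra : ∀ x : s, (G.induce s).Reachable x A := by
      intro x
      have hx : x.val = a ∨ x.val = b ∨ x.val = c ∨ x.val = d := by
        have h := x.property
        simp only [hs, Set.mem_insert_iff, Set.mem_singleton_iff] at h
        exact h
      have hXA : x = A ∨ x = B ∨ x = C ∨ x = D := by
        rcases hx with h | h | h | h
        · exact Or.inl (Subtype.ext h)
        · exact Or.inr (Or.inl (Subtype.ext h))
        · exact Or.inr (Or.inr (Or.inl (Subtype.ext h)))
        · exact Or.inr (Or.inr (Or.inr (Subtype.ext h)))
      rcases hXA with rfl | rfl | rfl | rfl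
      · exact Reachable.refl _
      · exact e1.symm.reachable
      · exact (e2.symm.reachable).trans e1.symm.reachable
      · exact (e3.symm.reachable).trans ((e2.symm.reachable).trans e1.symm.reachable)
    intro x y
    exact (hra x).trans (hra y).symm
  have hkey := hdh s hconn A D
  have hG2 : G.dist a d ≤ 2 := by
    have := dist_le (Walk.cons hae (Walk.cons hed Walk.nil))
    simpa using this
  have hAD : (G.induce s).dist A D ≤ 2 := by
    rw [hkey]; exact hG2
  have hr : (G.induce s).Reachable A D := hconn.preconnected A D
  have hADne : A ≠ D := fun h => hadne (congrArg Subtype.val h)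
  have hADadj : ¬ (G.induce s).Adj A D := fun h => had ((iadj _ _).mp h)
  obtain ⟨m, hm1, hm2⟩ := exists_mid (G.induce s) hr hAD hADne hADadj
  have g1 : G.Adj a m.val := (iadj _ _).mp hm1
  have g2 : G.Adj m.val d := (iadj _ _).mp hm2
  have hm : m.val = a ∨ m.val = b ∨ m.val = c ∨ m.val = d := by
    have h := m.property
    simp only [hs, Set.mem_insert_iff, Set.mem_singleton_iff] at h
    exact h
  rcases hm with h | h | h | h
  · rw [h] at g1; exact g1.ne rfl
  · rw [h] at g2; exact hbd g2
  · rw [h] at g1; exact hac g1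
  · rw [h] at g2; exact g2.ne rfl

/-- No induced P5 pattern implies distances in connected graphs are at most 3. -/
lemma dist_le_three {W : Type*} (H : SimpleGraph W)
    (h5 : ∀ x0 x1 x2 x3 x4 : W, H.Adj x0 x1 → H.Adj x1 x2 → H.Adj x2 x3 → H.Adj x3 x4 →
      ¬H.Adj x0 x2 → ¬H.Adj x0 x3 → ¬H.Adj x0 x4 → ¬H.Adj x1 x3 → ¬H.Adj x1 x4 →
      ¬H.Adj x2 x4 → False)
    {u v : W} (hr : H.Reachable u v) : H.dist u v ≤ 3 := by
  by_contra hgt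
  push_neg at hgt
  obtain ⟨p, hp⟩ := hr.exists_walk_length_eq_dist
  have key : ∀ w : H.Walk u v, H.dist u v ≤ w.length := fun w => dist_le w
  -- destructure p four times
  cases p with
  | nil => simp at hgt
  | cons h1 q1 =>
  cases q1 with
  | nil => simp at hp; omega
  | cons h2 q2 =>
  cases q2 with
  | nil => simp at hp; omega
  | cons h3 q3 =>
  cases q3 with
  | nil => simp at hp; omega
  | cons h4 q =>
  simp only [Walk.length_cons] at hp
  rename_i x1 x2 x3 x4
  -- hp : q.length + 1 + 1 + 1 + 1 = H.dist u v
  have hd : H.dist u v = q.length + 4 := by omega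
  refine h5 u x1 x2 x3 x4 h1 h2 h3 h4 ?_ ?_ ?_ ?_ ?_ ?_
  · intro hx
    have := key (Walk.cons hx (Walk.cons h3 (Walk.cons h4 q)))
    simp only [Walk.length_cons] at this
    omega
  · intro hx
    have := key (Walk.cons hx (Walk.cons h4 q))
    simp only [Walk.length_cons] at this
    omega
  · intro hx
    have := key (Walk.cons hx q)
    simp only [Walk.length_cons] at this
    omega
  · intro hx
    have := key (Walk.cons h1 (Walk.cons hx (Walk.cons h4 q)))
    simp only [Walk.length_cons] at this
    omega
  · intro hx
    have := key (Walk.cons h1 (Walk.cons hx q))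
    simp only [Walk.length_cons] at this
    omega
  · intro hx
    have := key (Walk.cons h1 (Walk.cons h2 (Walk.cons hx q)))
    simp only [Walk.length_cons] at this
    omega

/-- The backward direction: pattern-freeness implies distance-hereditary. -/
lemma dh_of_patterns
    (hP5 : ∀ x0 x1 x2 x3 x4 : V, G.Adj x0 x1 → G.Adj x1 x2 → G.Adj x2 x3 → G.Adj x3 x4 →
      ¬G.Adj x0 x2 → ¬G.Adj x0 x3 → ¬G.Adj x0 x4 → ¬G.Adj x1 x3 → ¬G.Adj x1 x4 →
      ¬G.Adj x2 x4 → False)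
    (hC5 : ∀ x0 x1 x2 x3 x4 : V, G.Adj x0 x1 → G.Adj x1 x2 → G.Adj x2 x3 → G.Adj x3 x4 →
      G.Adj x4 x0 → ¬G.Adj x0 x2 → ¬G.Adj x0 x3 → ¬G.Adj x1 x3 → ¬G.Adj x1 x4 →
      ¬G.Adj x2 x4 → False)
    (hHouse : ∀ x0 x1 x2 x3 x4 : V, G.Adj x0 x1 → G.Adj x1 x2 → G.Adj x2 x3 → G.Adj x3 x0 →
      G.Adj x0 x4 → G.Adj x1 x4 → ¬G.Adj x0 x2 → ¬G.Adj x1 x3 → ¬G.Adj x2 x4 →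
      ¬G.Adj x3 x4 → False)
    (hGem : ∀ x0 x1 x2 x3 x4 : V, G.Adj x0 x1 → G.Adj x1 x2 → G.Adj x2 x3 → G.Adj x0 x4 →
      G.Adj x1 x4 → G.Adj x2 x4 → G.Adj x3 x4 → ¬G.Adj x0 x2 → ¬G.Adj x0 x3 →
      ¬G.Adj x1 x3 → False) :
    DistanceHereditary G := by
  intro s hconn u v
  set H := G.induce s with hH
  have iadj : ∀ x y : s, H.Adj x y ↔ G.Adj x.val y.val := fun x y => Iff.rfl
  have hP5H : ∀ x0 x1 x2 x3 x4 : s, H.Adj x0 x1 → H.Adj x1 x2 → H.Adj x2 x3 → H.Adj x3 x4 →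
      ¬H.Adj x0 x2 → ¬H.Adj x0 x3 → ¬H.Adj x0 x4 → ¬H.Adj x1 x3 → ¬H.Adj x1 x4 →
      ¬H.Adj x2 x4 → False := by
    intro x0 x1 x2 x3 x4 a1 a2 a3 a4 n1 n2 n3 n4 n5 n6
    exact hP5 x0.val x1.val x2.val x3.val x4.val a1 a2 a3 a4 n1 n2 n3 n4 n5 n6
  have hr : H.Reachable u v := hconn.preconnected u v
  obtain ⟨p, hp⟩ := hr.exists_walk_length_eq_dist
  have hrG : G.Reachable u.val v.val := ⟨p.map (Embedding.induce s).toHom⟩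
  have hle : G.dist u.val v.val ≤ H.dist u v := by
    have := dist_le (p.map (Embedding.induce s).toHom)
    rwa [Walk.length_map, hp] at this
  have h3 : H.dist u v ≤ 3 := dist_le_three H hP5H hr
  rcases eq_or_ne u v with rfl | huv
  · simp [SimpleGraph.dist_self]
  have hne : u.val ≠ v.val := fun h => huv (Subtype.ext h)
  have hH0 : H.dist u v ≠ 0 := fun h => huv (hr.dist_eq_zero_iff.mp h)
  have hG0 : G.dist u.val v.val ≠ 0 := fun h => hne (hrG.dist_eq_zero_iff.mp h)
  by_cases hadj : H.Adj u v
  · have : G.Adj u.val v.val := (iadj u v).mp hadj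
    rw [dist_eq_one_iff_adj.mpr hadj, dist_eq_one_iff_adj.mpr this]
  have hGadj : ¬ G.Adj u.val v.val := fun h => hadj ((iadj u v).mpr h)
  have hH1 : H.dist u v ≠ 1 := fun h => hadj (dist_eq_one_iff_adj.mp h)
  have hG1 : G.dist u.val v.val ≠ 1 := fun h => hGadj (dist_eq_one_iff_adj.mp h)
  -- so 2 ≤ G.dist ≤ H.dist ≤ 3
  rcases Nat.lt_or_ge (G.dist u.val v.val) (H.dist u v) with hlt | hge
  swap
  · omega
  -- G.dist = 2, H.dist = 3
  have hH3 : H.dist u v = 3 := by omega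
  have hG2 : G.dist u.val v.val = 2 := by omega
  exfalso
  -- destructure p : walk of length 3 in H
  rw [hH3] at hp
  cases p with
  | nil => simp at hp
  | cons h1 q1 =>
  cases q1 with
  | nil => simp at hp
  | cons h2 q2 =>
  cases q2 with
  | nil => simp at hp
  | cons h3' q3 =>
  cases q3 with
  | cons h4 q => simp [Walk.length_cons] at hp
  | nil =>
  rename_i aa bb
  -- h1 : H.Adj u aa, h2 : H.Adj aa bb, h3' : H.Adj bb v
  have hkeyH : ∀ w : H.Walk u v, H.dist u v ≤ w.length := fun w => dist_le w
  have nub : ¬ H.Adj u bb := by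
    intro hx
    have := hkeyH (Walk.cons hx (Walk.cons h3' Walk.nil))
    rw [hH3] at this
    simp at this
  have nav : ¬ H.Adj aa v := by
    intro hx
    have := hkeyH (Walk.cons h1 (Walk.cons hx Walk.nil))
    rw [hH3] at this
    simp at this
  -- G-level facts
  have g1 : G.Adj u.val aa.val := (iadj _ _).mp h1
  have g2 : G.Adj aa.val bb.val := (iadj _ _).mp h2
  have g3 : G.Adj bb.val v.val := (iadj _ _).mp h3'
  have gub : ¬ G.Adj u.val bb.val := fun h => nub ((iadj _ _).mpr h)
  have gav : ¬ G.Adj aa.val v.val := fun h => nav ((iadj _ _).mpr h)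
  -- get middle vertex w in G
  obtain ⟨w, k1, k2⟩ := exists_mid G hrG (by omega) hne hGadj
  by_cases hwa : G.Adj w aa.val <;> by_cases hwb : G.Adj w bb.val
  · -- Gem on (u, aa, bb, v, w)
    exact hGem u.val aa.val bb.val v.val w g1 g2 g3 k1 hwa.symm hwb.symm k2.symm
      gub hGadj gav
  · -- House on (aa, w, v, bb, u)
    exact hHouse aa.val w v.val bb.val u.val hwa.symm k2 g3.symm g2.symm g1.symm k1.symm
      gav hwb (fun h => hGadj h.symm) (fun h => gub h.symm)
  · -- House on (bb, w, u, aa, v)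
    exact hHouse bb.val w u.val aa.val v.val hwb.symm k1.symm g1 g2 g3 k2
      (fun h => gub h.symm) hwa hGadj gav
  · -- C5 on (u, aa, bb, v, w) : cycle u-aa-bb-v-w-u
    exact hC5 u.val aa.val bb.val v.val w g1 g2 g3 k2.symm k1.symm
      gub hGadj gav (fun h => hwa h.symm) (fun h => hwb h.symm)

lemma patC5 (hn : ¬ HasInducedCopy C5 G) :
    ∀ x0 x1 x2 x3 x4 : V, G.Adj x0 x1 → G.Adj x1 x2 → G.Adj x2 x3 → G.Adj x3 x4 → G.Adj x4 x0 → ¬G.Adj x0 x2 → ¬G.Adj x0 x3 → ¬G.Adj x1 x3 → ¬G.Adj x1 x4 → ¬G.Adj x2 x4 → False := by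
  intro x0 x1 x2 x3 x4 a0 a1 a2 a3 a4 n0 n1 n2 n3 n4
  have a0' := a0.symm
  have a1' := a1.symm
  have a2' := a2.symm
  have a3' := a3.symm
  have a4' := a4.symm
  have n0' := fun h => n0 (G.adj_symm h)
  have n1' := fun h => n1 (G.adj_symm h)
  have n2' := fun h => n2 (G.adj_symm h)
  have n3' := fun h => n3 (G.adj_symm h)
  have n4' := fun h => n4 (G.adj_symm h)
  apply hn
  apply mkCopy C5 ![x0, x1, x2, x3, x4]
  · rw [C5_eq]; decide
  · intro i j hij
    rw [C5_eq] at hij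
    fin_cases i <;> fin_cases j <;>
      first
        | exact absurd hij (by decide)
        | assumption
  · intro i j hne hF
    rw [C5_eq] at hF
    fin_cases i <;> fin_cases j <;>
      first
        | exact absurd rfl hne
        | exact absurd (by decide) hF
        | assumption

lemma patP5 (hn : ¬ HasInducedCopy P5 G) :
    ∀ x0 x1 x2 x3 x4 : V, G.Adj x0 x1 → G.Adj x1 x2 → G.Adj x2 x3 → G.Adj x3 x4 → ¬G.Adj x0 x2 → ¬G.Adj x0 x3 → ¬G.Adj x0 x4 → ¬G.Adj x1 x3 → ¬G.Adj x1 x4 → ¬G.Adj x2 x4 → False := by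
  intro x0 x1 x2 x3 x4 a0 a1 a2 a3 n0 n1 n2 n3 n4 n5
  have a0' := a0.symm
  have a1' := a1.symm
  have a2' := a2.symm
  have a3' := a3.symm
  have n0' := fun h => n0 (G.adj_symm h)
  have n1' := fun h => n1 (G.adj_symm h)
  have n2' := fun h => n2 (G.adj_symm h)
  have n3' := fun h => n3 (G.adj_symm h)
  have n4' := fun h => n4 (G.adj_symm h)
  have n5' := fun h => n5 (G.adj_symm h)
  apply hn
  apply mkCopy P5 ![x0, x1, x2, x3, x4]
  · rw [P5_eq]; decide
  · intro i j hij
    rw [P5_eq] at hij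
    fin_cases i <;> fin_cases j <;>
      first
        | exact absurd hij (by decide)
        | assumption
  · intro i j hne hF
    rw [P5_eq] at hF
    fin_cases i <;> fin_cases j <;>
      first
        | exact absurd rfl hne
        | exact absurd (by decide) hF
        | assumption

lemma patHouse (hn : ¬ HasInducedCopy House G) :
    ∀ x0 x1 x2 x3 x4 : V, G.Adj x0 x1 → G.Adj x1 x2 → G.Adj x2 x3 → G.Adj x3 x0 → G.Adj x0 x4 → G.Adj x1 x4 → ¬G.Adj x0 x2 → ¬G.Adj x1 x3 → ¬G.Adj x2 x4 → ¬G.Adj x3 x4 → False := by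
  intro x0 x1 x2 x3 x4 a0 a1 a2 a3 a4 a5 n0 n1 n2 n3
  have a0' := a0.symm
  have a1' := a1.symm
  have a2' := a2.symm
  have a3' := a3.symm
  have a4' := a4.symm
  have a5' := a5.symm
  have n0' := fun h => n0 (G.adj_symm h)
  have n1' := fun h => n1 (G.adj_symm h)
  have n2' := fun h => n2 (G.adj_symm h)
  have n3' := fun h => n3 (G.adj_symm h)
  apply hn
  apply mkCopy House ![x0, x1, x2, x3, x4]
  · rw [House_eq]; decide
  · intro i j hij
    rw [House_eq] at hij
    fin_cases i <;> fin_cases j <;>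
      first
        | exact absurd hij (by decide)
        | assumption
  · intro i j hne hF
    rw [House_eq] at hF
    fin_cases i <;> fin_cases j <;>
      first
        | exact absurd rfl hne
        | exact absurd (by decide) hF
        | assumption

lemma patGem (hn : ¬ HasInducedCopy Gem G) :
    ∀ x0 x1 x2 x3 x4 : V, G.Adj x0 x1 → G.Adj x1 x2 → G.Adj x2 x3 → G.Adj x0 x4 → G.Adj x1 x4 → G.Adj x2 x4 → G.Adj x3 x4 → ¬G.Adj x0 x2 → ¬G.Adj x0 x3 → ¬G.Adj x1 x3 → False := by
  intro x0 x1 x2 x3 x4 a0 a1 a2 a3 a4 a5 a6 n0 n1 n2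
  have a0' := a0.symm
  have a1' := a1.symm
  have a2' := a2.symm
  have a3' := a3.symm
  have a4' := a4.symm
  have a5' := a5.symm
  have a6' := a6.symm
  have n0' := fun h => n0 (G.adj_symm h)
  have n1' := fun h => n1 (G.adj_symm h)
  have n2' := fun h => n2 (G.adj_symm h)
  apply hn
  apply mkCopy Gem ![x0, x1, x2, x3, x4]
  · rw [Gem_eq]; decide
  · intro i j hij
    rw [Gem_eq] at hij
    fin_cases i <;> fin_cases j <;>
      first
        | exact absurd hij (by decide)
        | assumption
  · intro i j hne hF
    rw [Gem_eq] at hF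
    fin_cases i <;> fin_cases j <;>
      first
        | exact absurd rfl hne
        | exact absurd (by decide) hF
        | assumption

end Aux

/-- `G` and its complement are both distance-hereditary iff `G` contains no
induced C5, House, P5, Gem, or co-Gem. -/
theorem stmt4 {V : Type*} (G : SimpleGraph V) :
    (DistanceHereditary G ∧ DistanceHereditary Gᶜ) ↔
      (¬ HasInducedCopy C5 G ∧ ¬ HasInducedCopy House G ∧ ¬ HasInducedCopy P5 G ∧
        ¬ HasInducedCopy Gem G ∧ ¬ HasInducedCopy CoGem G) := by
  constructor
  · rintro ⟨hG, hGc⟩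
    refine ⟨?_, ?_, ?_, ?_, ?_⟩ <;> rintro ⟨f⟩
    · -- C5
      have aux : ∀ i j : Fin 5, C5.Adj i j → G.Adj (f i) (f j) :=
        fun i j h => f.map_adj_iff.mpr h
      have aux' : ∀ i j : Fin 5, ¬C5.Adj i j → ¬G.Adj (f i) (f j) :=
        fun i j h hh => h (f.map_adj_iff.mp hh)
      exact notDH (f 0) (f 1) (f 2) (f 3) (f 4)
        (aux 0 1 (by rw [C5_eq]; decide)) (aux 1 2 (by rw [C5_eq]; decide))
        (aux 2 3 (by rw [C5_eq]; decide))
        (aux' 0 2 (by rw [C5_eq]; decide)) (aux' 0 3 (by rw [C5_eq]; decide))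
        (aux' 1 3 (by rw [C5_eq]; decide)) (f.injective.ne (by decide))
        (aux 0 4 (by rw [C5_eq]; decide)) (aux 4 3 (by rw [C5_eq]; decide)) hG
    · -- House : induced path f4-f0-f3-f2 with f1 adjacent to f4 and f2
      have aux : ∀ i j : Fin 5, House.Adj i j → G.Adj (f i) (f j) :=
        fun i j h => f.map_adj_iff.mpr h
      have aux' : ∀ i j : Fin 5, ¬House.Adj i j → ¬G.Adj (f i) (f j) :=
        fun i j h hh => h (f.map_adj_iff.mp hh)
      exact notDH (f 4) (f 0) (f 3) (f 2) (f 1)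
        (aux 4 0 (by rw [House_eq]; decide)) (aux 0 3 (by rw [House_eq]; decide))
        (aux 3 2 (by rw [House_eq]; decide))
        (aux' 4 3 (by rw [House_eq]; decide)) (aux' 4 2 (by rw [House_eq]; decide))
        (aux' 0 2 (by rw [House_eq]; decide)) (f.injective.ne (by decide))
        (aux 4 1 (by rw [House_eq]; decide)) (aux 1 2 (by rw [House_eq]; decide)) hG
    · -- P5 : complement pattern in Gᶜ
      have caux : ∀ i j : Fin 5, i ≠ j → ¬P5.Adj i j → Gᶜ.Adj (f i) (f j) :=
        fun i j hne h => (G.compl_adj _ _).mpr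
          ⟨f.injective.ne hne, fun hh => h (f.map_adj_iff.mp hh)⟩
      have caux' : ∀ i j : Fin 5, P5.Adj i j → ¬Gᶜ.Adj (f i) (f j) :=
        fun i j h hh => ((G.compl_adj _ _).mp hh).2 (f.map_adj_iff.mpr h)
      exact notDH (f 1) (f 3) (f 0) (f 2) (f 4)
        (caux 1 3 (by decide) (by rw [P5_eq]; decide))
        (caux 3 0 (by decide) (by rw [P5_eq]; decide))
        (caux 0 2 (by decide) (by rw [P5_eq]; decide))
        (caux' 1 0 (by rw [P5_eq]; decide)) (caux' 1 2 (by rw [P5_eq]; decide))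
        (caux' 3 2 (by rw [P5_eq]; decide)) (f.injective.ne (by decide))
        (caux 1 4 (by decide) (by rw [P5_eq]; decide))
        (caux 4 2 (by decide) (by rw [P5_eq]; decide)) hGc
    · -- Gem
      have aux : ∀ i j : Fin 5, Gem.Adj i j → G.Adj (f i) (f j) :=
        fun i j h => f.map_adj_iff.mpr h
      have aux' : ∀ i j : Fin 5, ¬Gem.Adj i j → ¬G.Adj (f i) (f j) :=
        fun i j h hh => h (f.map_adj_iff.mp hh)
      exact notDH (f 0) (f 1) (f 2) (f 3) (f 4)
        (aux 0 1 (by rw [Gem_eq]; decide)) (aux 1 2 (by rw [Gem_eq]; decide))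
        (aux 2 3 (by rw [Gem_eq]; decide))
        (aux' 0 2 (by rw [Gem_eq]; decide)) (aux' 0 3 (by rw [Gem_eq]; decide))
        (aux' 1 3 (by rw [Gem_eq]; decide)) (f.injective.ne (by decide))
        (aux 0 4 (by rw [Gem_eq]; decide)) (aux 4 3 (by rw [Gem_eq]; decide)) hG
    · -- CoGem : complement pattern in Gᶜ
      have caux : ∀ i j : Fin 5, i ≠ j → ¬CoGem.Adj i j → Gᶜ.Adj (f i) (f j) :=
        fun i j hne h => (G.compl_adj _ _).mpr
          ⟨f.injective.ne hne, fun hh => h (f.map_adj_iff.mp hh)⟩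
      have caux' : ∀ i j : Fin 5, CoGem.Adj i j → ¬Gᶜ.Adj (f i) (f j) :=
        fun i j h hh => ((G.compl_adj _ _).mp hh).2 (f.map_adj_iff.mpr h)
      exact notDH (f 1) (f 3) (f 0) (f 2) (f 4)
        (caux 1 3 (by decide) (by rw [CoGem_eq]; decide))
        (caux 3 0 (by decide) (by rw [CoGem_eq]; decide))
        (caux 0 2 (by decide) (by rw [CoGem_eq]; decide))
        (caux' 1 0 (by rw [CoGem_eq]; decide)) (caux' 1 2 (by rw [CoGem_eq]; decide))
        (caux' 3 2 (by rw [CoGem_eq]; decide)) (f.injective.ne (by decide))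
        (caux 1 4 (by decide) (by rw [CoGem_eq]; decide))
        (caux 4 2 (by decide) (by rw [CoGem_eq]; decide)) hGc
  · rintro ⟨n1, n2, n3, n4, n5⟩
    have nC5c : ¬ HasInducedCopy C5 Gᶜ := fun h =>
      n1 (transferCompl C5 C5 ![0,2,4,1,3] (by decide)
        (by rw [C5_eq]; decide) h)
    have nHousec : ¬ HasInducedCopy House Gᶜ := fun h =>
      n3 (transferCompl House P5 ![0,2,4,3,1] (by decide)
        (by rw [House_eq, P5_eq]; decide) h)
    have nP5c : ¬ HasInducedCopy P5 Gᶜ := fun h =>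
      n2 (transferCompl P5 House ![0,4,1,3,2] (by decide)
        (by rw [House_eq, P5_eq]; decide) h)
    have nGemc : ¬ HasInducedCopy Gem Gᶜ := fun h =>
      n5 (transferCompl Gem CoGem ![1,3,0,2,4] (by decide)
        (by rw [Gem_eq, CoGem_eq]; decide) h)
    exact ⟨dh_of_patterns (patP5 n3) (patC5 n1) (patHouse n2) (patGem n4),
      dh_of_patterns (patP5 nP5c) (patC5 nC5c) (patHouse nHousec) (patGem nGemc)⟩
end

section
/- Every cograph on at least two vertices contains a pair of twins: two distinct vertices u, v with N(u) \ {u,v} = N(v) \ {u,v}. -/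
open SimpleGraph
set_option linter.unusedSectionVars false
set_option linter.unusedVariables false

namespace Stmt7
variable {V : Type*} [DecidableEq V]

/-- complement relation -/
def co (A : V → V → Prop) : V → V → Prop := fun x y => x ≠ y ∧ ¬ A x y

lemma co_symm {A : V → V → Prop} (h : Symmetric A) : Symmetric (co A) :=
  fun _ _ ⟨hne, hA⟩ => ⟨hne.symm, fun h' => hA (h h')⟩

lemma co_irrefl {A : V → V → Prop} : Irreflexive (co A) := fun _ ⟨hne, _⟩ => hne rfl

/-- graph of relation A restricted to S -/
def HG (A : V → V → Prop) (S : Finset V) : SimpleGraph V where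
  Adj x y := x ∈ S ∧ y ∈ S ∧ x ≠ y ∧ A x y ∧ A y x
  symm := ⟨fun x y ⟨hx, hy, hne, h1, h2⟩ => ⟨hy, hx, hne.symm, h2, h1⟩⟩
  loopless := ⟨fun x ⟨_, _, hne, _, _⟩ => hne rfl⟩

lemma HG_adj {A : V → V → Prop} {S : Finset V} {x y : V} :
    (HG A S).Adj x y ↔ x ∈ S ∧ y ∈ S ∧ x ≠ y ∧ A x y ∧ A y x := Iff.rfl

def Pfree (A : V → V → Prop) (S : Finset V) : Prop :=
  ¬ ∃ a b c d, a ∈ S ∧ b ∈ S ∧ c ∈ S ∧ d ∈ S ∧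
    A a b ∧ A b c ∧ A c d ∧ ¬ A a c ∧ ¬ A b d ∧ ¬ A a d

lemma Pfree_mono {A : V → V → Prop} {S T : Finset V} (hTS : T ⊆ S) (h : Pfree A S) :
    Pfree A T := by
  rintro ⟨a, b, c, d, ha, hb, hc, hd, h1, h2, h3, h4, h5, h6⟩
  exact h ⟨a, b, c, d, hTS ha, hTS hb, hTS hc, hTS hd, h1, h2, h3, h4, h5, h6⟩

def disconn (A : V → V → Prop) (S : Finset V) : Prop :=
  ∃ x y, x ∈ S ∧ y ∈ S ∧ x ≠ y ∧ ¬ (HG A S).Reachable x y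

lemma walk_closed {W : Type*} {G : SimpleGraph W} (P : W → Prop)
    (hstep : ∀ z b, P z → G.Adj z b → P b) :
    ∀ {x y : W}, G.Walk x y → P x → P y := by
  intro x y w
  induction w with
  | nil => exact id
  | cons h' q ih => exact fun hx => ih (hstep _ _ hx h')

lemma reach_closed {W : Type*} {G : SimpleGraph W} (P : W → Prop)
    (hstep : ∀ z b, P z → G.Adj z b → P b) {x y : W}
    (hr : G.Reachable x y) (hx : P x) : P y := by
  obtain ⟨w⟩ := hr; exact walk_closed P hstep w hx

lemma no_adj_reachable {W : Type*} {G : SimpleGraph W} {u y : W}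
    (h : ∀ z, ¬ G.Adj u z) (hr : G.Reachable u y) : y = u :=
  reach_closed (fun z => z = u)
    (fun z b hz hadj => absurd (hz ▸ hadj) (h b)) hr rfl

lemma walk_boundary {W : Type*} {G : SimpleGraph W} (B : W → Prop) :
    ∀ {x y : W}, G.Walk x y → B x → ¬ B y →
      ∃ p p', G.Adj p p' ∧ B p ∧ ¬ B p' ∧ G.Reachable x p := by
  intro x y w
  induction w with
  | nil => exact fun hx hy => absurd hx hy
  | @cons u v' w' h' q ih =>
    intro hx hy
    by_cases hb : B v'
    · obtain ⟨p, p', h1, h2, h3, h4⟩ := ih hb hy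
      exact ⟨p, p', h1, h2, h3, h'.reachable.trans h4⟩
    · exact ⟨_, _, h', hx, hb, Reachable.refl _⟩

lemma six_ne {A : V → V → Prop} (hsym : Symmetric A) (hirr : Irreflexive A)
    {a b c d : V} (hab : A a b) (hbc : A b c) (hcd : A c d)
    (hac : ¬A a c) (hbd : ¬A b d) (had : ¬A a d) :
    a ≠ c ∧ b ≠ d ∧ a ≠ d := by
  refine ⟨fun h => ?_, fun h => ?_, fun h => ?_⟩
  · subst h; exact had hcd
  · subst h; exact had hab
  · subst h; exact hac (hsym hcd)

lemma Pfree_co {A : V → V → Prop} (hsym : Symmetric A) {S : Finset V}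
    (hP : Pfree A S) : Pfree (co A) S := by
  rintro ⟨a, b, c, d, ha, hb, hc, hd, hab, hbc, hcd, hac, hbd, had⟩
  obtain ⟨hac', hbd', had'⟩ := six_ne (co_symm hsym) co_irrefl hab hbc hcd hac hbd had
  have hAac : A a c := by by_contra h; exact hac ⟨hac', h⟩
  have hAbd : A b d := by by_contra h; exact hbd ⟨hbd', h⟩
  have hAad : A a d := by by_contra h; exact had ⟨had', h⟩
  exact hP ⟨c, a, d, b, hc, ha, hd, hb, hsym hAac, hAad, hsym hAbd,
    hcd.2, hab.2, fun h => hbc.2 (hsym h)⟩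

lemma HG_co_co (A : V → V → Prop) (S : Finset V) : HG (co (co A)) S = HG A S := by
  ext x y
  simp only [HG_adj, co]
  constructor
  · rintro ⟨hx, hy, hne, ⟨_, h1⟩, ⟨_, h2⟩⟩
    refine ⟨hx, hy, hne, ?_, ?_⟩
    · by_contra h; exact h1 ⟨hne, h⟩
    · by_contra h; exact h2 ⟨hne.symm, h⟩
  · rintro ⟨hx, hy, hne, h1, h2⟩
    exact ⟨hx, hy, hne, ⟨hne, fun h => h.2 h1⟩, ⟨hne.symm, fun h => h.2 h2⟩⟩

lemma disconn_co_co {A : V → V → Prop} {S : Finset V} (h : disconn (co (co A)) S) :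
    disconn A S := by
  unfold disconn at *
  rwa [HG_co_co] at h


lemma SE_step (A : V → V → Prop) (hsym : Symmetric A) (hirr : Irreflexive A)
    (S : Finset V) (hP : Pfree A S) (v : V) (hv : v ∈ S)
    (hd : disconn A (S.erase v)) : disconn A S ∨ disconn (co A) S := by
  obtain ⟨x, y, hx, hy, hxy, hnr⟩ := hd
  set S' := S.erase v with hS'def
  have hxS : x ∈ S := Finset.mem_of_mem_erase hx
  have hyS : y ∈ S := Finset.mem_of_mem_erase hy
  have hxv : x ≠ v := Finset.ne_of_mem_erase hx
  have hyv : y ≠ v := Finset.ne_of_mem_erase hy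
  by_cases hdom : ∀ w ∈ S', A v w
  · right
    refine ⟨v, x, hv, hxS, Ne.symm hxv, fun hr => ?_⟩
    have hnoadj : ∀ z, ¬ (HG (co A) S).Adj v z := by
      rintro z ⟨hvS, hzS, hvz, h1, _⟩
      have hz' : z ∈ S' := Finset.mem_erase.mpr ⟨Ne.symm hvz, hzS⟩
      exact h1.2 (hdom z hz')
    exact hxv (no_adj_reachable hnoadj hr)
  · push_neg at hdom
    obtain ⟨w, hw, hvw⟩ := hdom
    have hwS : w ∈ S := Finset.mem_of_mem_erase hw
    -- closure: if v has no A-neighbor in the S'-component of z0, then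
    -- reachability from z0 in S implies reachability in S'
    have closure : ∀ z0, z0 ∈ S' →
        (∀ z, z ∈ S' → (HG A S').Reachable z0 z → ¬ A v z) →
        ∀ t, (HG A S).Reachable z0 t → (HG A S').Reachable z0 t := by
      intro z0 hz0 hno t hr
      have key : t ∈ S' ∧ (HG A S').Reachable z0 t := by
        refine reach_closed (fun t => t ∈ S' ∧ (HG A S').Reachable z0 t) ?_ hr
          ⟨hz0, Reachable.refl _⟩
        rintro z b ⟨hzS', hzr⟩ ⟨hzS, hbS, hzb, hab, hba⟩
        have hbv : b ≠ v := by
          rintro rfl; exact hno z hzS' hzr hba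
        have hbS' : b ∈ S' := Finset.mem_erase.mpr ⟨hbv, hbS⟩
        exact ⟨hbS', hzr.trans (Adj.reachable ⟨hzS', hbS', hzb, hab, hba⟩)⟩
      exact key.2
    by_cases hKw : ∃ m, m ∈ S' ∧ (HG A S').Reachable w m ∧ A v m
    case neg =>
      -- no A-neighbor of v in the component of w: G is disconnected
      have hclos := closure w hw (fun z hz hreach hAvz => hKw ⟨z, hz, hreach, hAvz⟩)
      by_cases hwx : (HG A S').Reachable w x
      · left
        refine ⟨w, y, hwS, hyS, fun h => ?_, fun hr => ?_⟩
        · subst h; exact hnr hwx.symm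
        · exact hnr (hwx.symm.trans (hclos y hr))
      · left
        refine ⟨w, x, hwS, hxS, fun h => ?_, fun hr => ?_⟩
        · subst h; exact hwx (Reachable.refl _)
        · exact hwx (hclos x hr)
    case pos =>
    obtain ⟨m, hm, hwm, hvm⟩ := hKw
    by_cases hKx : ∃ a, a ∈ S' ∧ (HG A S').Reachable x a ∧ A v a
    case neg =>
      left
      have hclos := closure x hx (fun z hz hreach hAvz => hKx ⟨z, hz, hreach, hAvz⟩)
      exact ⟨x, y, hxS, hyS, hxy, fun hr => hnr (hclos y hr)⟩
    case pos =>
    obtain ⟨a, ha, hxa, hva⟩ := hKx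
    by_cases hKy : ∃ b, b ∈ S' ∧ (HG A S').Reachable y b ∧ A v b
    case neg =>
      left
      have hclos := closure y hy (fun z hz hreach hAvz => hKy ⟨z, hz, hreach, hAvz⟩)
      exact ⟨y, x, hyS, hxS, hxy.symm, fun hr => hnr ((hclos x hr).symm)⟩
    case pos =>
    exfalso
    obtain ⟨b, hb, hyb, hvb⟩ := hKy
    obtain ⟨wk⟩ := hwm.symm
    obtain ⟨p, p', hpp', hvp, hvp', hmp⟩ := walk_boundary (fun z => A v z) wk hvm hvw
    obtain ⟨hpS', hp'S', hpne, hApp', hAp'p⟩ := hpp'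
    have hwp : (HG A S').Reachable w p := hwm.trans hmp
    have hwp' : (HG A S').Reachable w p' := hwp.trans (Adj.reachable ⟨hpS', hp'S', hpne, hApp', hAp'p⟩)
    have hpS : p ∈ S := Finset.mem_of_mem_erase hpS'
    have hp'S : p' ∈ S := Finset.mem_of_mem_erase hp'S'
    have haS : a ∈ S := Finset.mem_of_mem_erase ha
    have hbS : b ∈ S := Finset.mem_of_mem_erase hb
    by_cases hxw : (HG A S').Reachable x w
    · -- use c := b : no edges from {p, p'} (⊆ comp of x) to b (comp of y)
      have hnxb : ¬ (HG A S').Reachable x b := fun h => hnr (h.trans hyb.symm)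
      have hpb : ¬ A p b := fun h => hnxb ((hxw.trans hwp).trans
        (Adj.reachable (show (HG A S').Adj p b from ⟨hpS', hb, fun e => hirr p (e ▸ h), h, hsym h⟩)))
      have hp'b : ¬ A p' b := fun h => hnxb ((hxw.trans hwp').trans
        (Adj.reachable (show (HG A S').Adj p' b from ⟨hp'S', hb, fun e => hirr p' (e ▸ h), h, hsym h⟩)))
      exact hP ⟨p', p, v, b, hp'S, hpS, hv, hbS, hAp'p, hsym hvp, hvb,
        fun h => hvp' (hsym h), hpb, hp'b⟩
    · -- use c := a : no edges from {p, p'} (comp of w) to a (comp of x)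
      have hpa : ¬ A p a := by
        intro h
        have hne : a ≠ p := fun e => hirr p (by rw [e] at h; exact h)
        have hadj : (HG A S').Adj a p := ⟨ha, hpS', hne, hsym h, h⟩
        exact hxw (hxa.trans (hadj.reachable.trans hwp.symm))
      have hp'a : ¬ A p' a := by
        intro h
        have hne : a ≠ p' := fun e => hirr p' (by rw [e] at h; exact h)
        have hadj : (HG A S').Adj a p' := ⟨ha, hp'S', hne, hsym h, h⟩
        exact hxw (hxa.trans (hadj.reachable.trans hwp'.symm))
      exact hP ⟨p', p, v, a, hp'S, hpS, hv, haS, hAp'p, hsym hvp, hva,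
        fun h => hvp' (hsym h), hpa, hp'a⟩

lemma SE (A : V → V → Prop) (hsym : Symmetric A) (hirr : Irreflexive A)
    (S : Finset V) : 2 ≤ S.card → Pfree A S → disconn A S ∨ disconn (co A) S := by
  induction S using Finset.strongInductionOn with
  | _ S IH =>
    intro h2 hP
    by_cases hc : S.card = 2
    · obtain ⟨x, y, hxy, rfl⟩ := Finset.card_eq_two.mp hc
      have hx : x ∈ ({x, y} : Finset V) := by simp
      have hy : y ∈ ({x, y} : Finset V) := by simp
      by_cases hA : A x y
      · right
        refine ⟨x, y, hx, hy, hxy, fun hr => ?_⟩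
        have hnoadj : ∀ z, ¬ (HG (co A) ({x, y} : Finset V)).Adj x z := by
          rintro z ⟨hxS, hzS, hxz, h1, _⟩
          rcases Finset.mem_insert.mp hzS with rfl | hzy
          · exact hxz rfl
          · rw [Finset.mem_singleton] at hzy
            subst hzy
            exact h1.2 hA
        exact hxy (no_adj_reachable hnoadj hr).symm
      · left
        refine ⟨x, y, hx, hy, hxy, fun hr => ?_⟩
        have hnoadj : ∀ z, ¬ (HG A ({x, y} : Finset V)).Adj x z := by
          rintro z ⟨hxS, hzS, hxz, h1, _⟩
          rcases Finset.mem_insert.mp hzS with rfl | hzy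
          · exact hxz rfl
          · rw [Finset.mem_singleton] at hzy
            subst hzy
            exact hA h1
        exact hxy (no_adj_reachable hnoadj hr).symm
    · have h3 : 3 ≤ S.card := by omega
      have hne : S.Nonempty := Finset.card_pos.mp (by omega)
      obtain ⟨v, hv⟩ := hne
      have hss : S.erase v ⊂ S := Finset.erase_ssubset hv
      have hcard' : 2 ≤ (S.erase v).card := by
        rw [Finset.card_erase_of_mem hv]; omega
      rcases IH (S.erase v) hss hcard' (Pfree_mono (Finset.erase_subset v S) hP) with hd | hd
      · exact SE_step A hsym hirr S hP v hv hd
      · rcases SE_step (co A) (co_symm hsym) co_irrefl S (Pfree_co hsym hP) v hv hd with h | h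
        · exact Or.inr h
        · exact Or.inl (disconn_co_co h)

def TwinsRel (A : V → V → Prop) (S : Finset V) : Prop :=
  ∃ u v, u ∈ S ∧ v ∈ S ∧ u ≠ v ∧ ∀ w ∈ S, w ≠ u → w ≠ v → (A u w ↔ A v w)

lemma TW_step (A : V → V → Prop) (hsym : Symmetric A) (hirr : Irreflexive A)
    (S : Finset V) (hP : Pfree A S) (h3 : 3 ≤ S.card) (hd : disconn A S)
    (IH : ∀ m < S.card, ∀ A' : V → V → Prop, Symmetric A' → Irreflexive A' →
      ∀ T : Finset V, T.card = m → 2 ≤ m → Pfree A' T → TwinsRel A' T) :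
    TwinsRel A S := by
  classical
  obtain ⟨x, y, hx, hy, hxy, hnr⟩ := hd
  set C : Finset V := S.filter (fun z => (HG A S).Reachable x z) with hCdef
  have hCS : C ⊆ S := Finset.filter_subset _ _
  have hxC : x ∈ C := Finset.mem_filter.mpr ⟨hx, Reachable.refl _⟩
  have hyC : y ∉ C := fun h => hnr (Finset.mem_filter.mp h).2
  have hCss : C ⊂ S := ⟨hCS, fun h => hyC (h hy)⟩
  have hCcard : C.card < S.card := Finset.card_lt_card hCss
  -- key: no edges out of C
  have hout : ∀ u ∈ C, ∀ w ∈ S, w ∉ C → ¬ A u w := by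
    intro u hu w hw hwC hA
    have huS : u ∈ S := hCS hu
    have hune : u ≠ w := fun e => hirr u (e ▸ hA)
    have : w ∈ C := Finset.mem_filter.mpr
      ⟨hw, (Finset.mem_filter.mp hu).2.trans (Adj.reachable ⟨huS, hw, hune, hA, hsym hA⟩)⟩
    exact hwC this
  by_cases hC2 : 2 ≤ C.card
  · obtain ⟨u, v, huC, hvC, huv, htw⟩ :=
      IH C.card hCcard A hsym hirr C rfl hC2 (Pfree_mono hCS hP)
    refine ⟨u, v, hCS huC, hCS hvC, huv, fun w hw hwu hwv => ?_⟩
    by_cases hwC : w ∈ C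
    · exact htw w hwC hwu hwv
    · constructor
      · intro h; exact absurd h (hout u huC w hw hwC)
      · intro h; exact absurd h (hout v hvC w hw hwC)
  · -- C = {x} : x is isolated in S
    have hC1 : C = {x} := by
      apply Finset.eq_singleton_iff_unique_mem.mpr
      refine ⟨hxC, fun z hz => ?_⟩
      by_contra hzx
      have : 2 ≤ C.card := Finset.one_lt_card.mpr ⟨z, hz, x, hxC, hzx⟩
      exact hC2 this
    have hiso : ∀ z ∈ S, ¬ A x z := by
      intro z hz hA
      have hzne : x ≠ z := fun e => hirr x (e ▸ hA)
      have : z ∈ C := Finset.mem_filter.mpr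
        ⟨hz, Adj.reachable ⟨hx, hz, hzne, hA, hsym hA⟩⟩
      rw [hC1, Finset.mem_singleton] at this
      exact hzne this.symm
    set S' : Finset V := S.erase x with hS'def
    have hS'card : S'.card = S.card - 1 := Finset.card_erase_of_mem hx
    have hS'2 : 2 ≤ S'.card := by omega
    have hS'lt : S'.card < S.card := by omega
    obtain ⟨u, v, huS', hvS', huv, htw⟩ :=
      IH S'.card hS'lt A hsym hirr S' rfl hS'2 (Pfree_mono (Finset.erase_subset x S) hP)
    have huS : u ∈ S := Finset.mem_of_mem_erase huS'
    have hvS : v ∈ S := Finset.mem_of_mem_erase hvS'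
    refine ⟨u, v, huS, hvS, huv, fun w hw hwu hwv => ?_⟩
    by_cases hwx : w = x
    · subst hwx
      constructor
      · intro h; exact absurd (hsym h) (hiso u huS)
      · intro h; exact absurd (hsym h) (hiso v hvS)
    · exact htw w (Finset.mem_erase.mpr ⟨hwx, hw⟩) hwu hwv

lemma TW (n : ℕ) : ∀ (A : V → V → Prop), Symmetric A → Irreflexive A →
    ∀ S : Finset V, S.card = n → 2 ≤ n → Pfree A S → TwinsRel A S := by
  induction n using Nat.strong_induction_on with
  | _ n IH =>
    intro A hsym hirr S hcard h2 hP
    by_cases hc : n = 2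
    · subst hc
      obtain ⟨x, y, hxy, rfl⟩ := Finset.card_eq_two.mp hcard
      refine ⟨x, y, by simp, by simp, hxy, fun w hw hwx hwy => ?_⟩
      rcases Finset.mem_insert.mp hw with rfl | h
      · exact absurd rfl hwx
      · rw [Finset.mem_singleton] at h; exact absurd h hwy
    · have h3 : 3 ≤ S.card := by omega
      have IH' : ∀ m < S.card, ∀ A' : V → V → Prop, Symmetric A' → Irreflexive A' →
          ∀ T : Finset V, T.card = m → 2 ≤ m → Pfree A' T → TwinsRel A' T := by
        intro m hm A' hs' hi' T hT h2' hP'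
        exact IH m (by omega) A' hs' hi' T hT h2' hP'
      rcases SE A hsym hirr S (by omega) hP with hd | hd
      · exact TW_step A hsym hirr S hP h3 hd IH'
      · have := TW_step (co A) (co_symm hsym) co_irrefl S (Pfree_co hsym hP) h3 hd IH'
        obtain ⟨u, v, hu, hv, huv, htw⟩ := this
        refine ⟨u, v, hu, hv, huv, fun w hw hwu hwv => ?_⟩
        have h := htw w hw hwu hwv
        simp only [co] at h
        constructor
        · intro hA
          by_contra hB
          exact (h.mpr ⟨Ne.symm hwv, hB⟩).2 hA
        · intro hA
          by_contra hB
          exact (h.mp ⟨Ne.symm hwu, hB⟩).2 hA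

end Stmt7

open SimpleGraph

/-- The path graph on 4 vertices. -/
def P4 : SimpleGraph (Fin 4) := fromEdgeSet {s(0,1), s(1,2), s(2,3)}

/-- `u` and `v` are twins: all other vertices see `u` iff they see `v`. -/
def Twins {V : Type*} (G : SimpleGraph V) (u v : V) : Prop :=
  u ≠ v ∧ ∀ w, w ≠ u → w ≠ v → (G.Adj u w ↔ G.Adj v w)

lemma P4_adj_iff (i j : Fin 4) :
    P4.Adj i j ↔ ((i = 0 ∧ j = 1) ∨ (i = 1 ∧ j = 0) ∨ (i = 1 ∧ j = 2) ∨
      (i = 2 ∧ j = 1) ∨ (i = 2 ∧ j = 3) ∨ (i = 3 ∧ j = 2)) := by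
  simp only [P4, fromEdgeSet_adj, Set.mem_insert_iff, Set.mem_singleton_iff, Sym2.eq_iff]
  constructor
  · rintro ⟨h, hne⟩
    fin_cases i <;> fin_cases j <;> simp_all
  · intro h
    fin_cases i <;> fin_cases j <;> simp_all
    
/-- every cograph on at least two vertices contains a pair of twins. -/
theorem stmt7 {V : Type*} [Fintype V] (G : SimpleGraph V)
    (hcard : 2 ≤ Fintype.card V) (hcog : ¬ HasInducedCopy P4 G) :
    ∃ u v, Twins G u v := by
  classical
  have hP : Stmt7.Pfree G.Adj Finset.univ := by
    rintro ⟨a, b, c, d, -, -, -, -, hab, hbc, hcd, hac, hbd, had⟩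
    obtain ⟨hac', hbd', had'⟩ := Stmt7.six_ne (A := G.Adj) (fun _ _ h => G.adj_symm h) (fun a => G.loopless.irrefl a) hab hbc hcd hac hbd had
    have h1 : a ≠ b := G.ne_of_adj hab
    have h2 : b ≠ c := G.ne_of_adj hbc
    have h3 : c ≠ d := G.ne_of_adj hcd
    apply hcog
    refine ⟨⟨⟨![a, b, c, d], ?_⟩, ?_⟩⟩
    · intro i j hij
      fin_cases i <;> fin_cases j <;> simp_all [Matrix.cons_val_zero, Matrix.cons_val_one]
    · intro i j
      show G.Adj (![a, b, c, d] i) (![a, b, c, d] j) ↔ P4.Adj i j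
      have hba := G.adj_symm hab
      have hcb := G.adj_symm hbc
      have hdc := G.adj_symm hcd
      have hca : ¬ G.Adj c a := fun h => hac (G.adj_symm h)
      have hdb : ¬ G.Adj d b := fun h => hbd (G.adj_symm h)
      have hda : ¬ G.Adj d a := fun h => had (G.adj_symm h)
      rw [P4_adj_iff]
      fin_cases i <;> fin_cases j <;> simp_all [SimpleGraph.irrefl, Function.Embedding.coeFn_mk]
  obtain ⟨u, v, -, -, huv, h⟩ := Stmt7.TW (Fintype.card V) G.Adj (fun _ _ h => G.adj_symm h) (fun a => G.loopless.irrefl a)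
    Finset.univ (by simp) hcard hP
  exact ⟨u, v, huv, fun w hwu hwv => h w (Finset.mem_univ w) hwu hwv⟩
end

section
/- The class of distance-hereditary graphs is closed under twin addition: if G is distance-hereditary and G' is obtained from G by adding a new vertex that is a twin of an existing vertex, then G' is distance-hereditary. -/
open SimpleGraph

namespace TwinAux

variable {V : Type*}

lemma collapse_walk (G : SimpleGraph V) (f : V → V)
    (hf : ∀ a b, G.Adj a b → G.Adj (f a) (f b) ∨ f a = f b)
    {x y : V} (p : G.Walk x y) :
    ∃ q : G.Walk (f x) (f y), q.length ≤ p.length ∧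
      ∀ w ∈ q.support, ∃ z ∈ p.support, f z = w := by
  induction p with
  | nil => exact ⟨.nil, le_refl _, by simp⟩
  | cons h p ih =>
    obtain ⟨q, hq, hsup⟩ := ih
    rcases hf _ _ h with hadj | heq
    · refine ⟨.cons hadj q, by simpa using Nat.succ_le_succ hq, ?_⟩
      intro w hw
      rw [SimpleGraph.Walk.support_cons] at hw
      rcases List.mem_cons.mp hw with rfl | hw
      · exact ⟨_, by simp, rfl⟩
      · obtain ⟨z, hz, hfz⟩ := hsup w hw
        exact ⟨z, by simp [hz], hfz⟩
    · refine ⟨q.copy heq.symm rfl, ?_, ?_⟩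
      · simp only [SimpleGraph.Walk.length_copy]
        exact hq.trans (by simp)
      · intro w hw
        rw [SimpleGraph.Walk.support_copy] at hw
        obtain ⟨z, hz, hfz⟩ := hsup w hw
        exact ⟨z, by simp [hz], hfz⟩

lemma lift_walk (G : SimpleGraph V) (t : Set V) :
    ∀ {x y : V} (p : G.Walk x y) (hx : x ∈ t) (hy : y ∈ t),
      (∀ w ∈ p.support, w ∈ t) →
      ∃ q : (G.induce t).Walk ⟨x, hx⟩ ⟨y, hy⟩, q.length = p.length := by
  intro x y p
  induction p with
  | nil => intro hx hy _; exact ⟨.nil, rfl⟩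
  | @cons a b c h p ih =>
    intro hx hy hsup
    have hb : b ∈ t := hsup b (by simp)
    obtain ⟨q, hq⟩ := ih hb hy (fun w hw => hsup w (by simp [hw]))
    have hadj : (G.induce t).Adj ⟨a, hx⟩ ⟨b, hb⟩ := h
    exact ⟨.cons hadj q, by simp [hq]⟩

/-- the projection hom from an induced subgraph -/
def down (G : SimpleGraph V) (t : Set V) : G.induce t →g G := ⟨Subtype.val, fun h => h⟩

lemma down_walk (G : SimpleGraph V) (t : Set V) {x y : ↥t} (q : (G.induce t).Walk x y) :
    ∃ p : G.Walk x.1 y.1, p.length = q.length ∧ ∀ w ∈ p.support, w ∈ t := by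
  refine ⟨q.map (down G t), q.length_map _, ?_⟩
  intro w hw
  replace hw : w ∈ q.support.map (down G t) := by
    rw [← SimpleGraph.Walk.support_map]; exact hw
  obtain ⟨z, _, rfl⟩ := List.mem_map.mp hw
  exact z.2

lemma iso_dist_eq {W : Type*} {G : SimpleGraph V} {H : SimpleGraph W} (e : G ≃g H)
    (x y : V) : H.dist (e x) (e y) = G.dist x y := by
  by_cases h : G.Reachable x y
  · have h' : H.Reachable (e x) (e y) := h.map e.toHom
    apply le_antisymm
    · obtain ⟨p, hp⟩ := h.exists_walk_length_eq_dist
      calc H.dist (e x) (e y) ≤ (p.map e.toHom).length := dist_le _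
        _ = G.dist x y := by rw [SimpleGraph.Walk.length_map, hp]
    · obtain ⟨p, hp⟩ := h'.exists_walk_length_eq_dist
      calc G.dist x y ≤ ((p.map e.symm.toHom).copy (by simp) (by simp)).length :=
            dist_le _
        _ = H.dist (e x) (e y) := by
            rw [SimpleGraph.Walk.length_copy, SimpleGraph.Walk.length_map, hp]
  · have h' : ¬ H.Reachable (e x) (e y) := by
      intro hr
      exact h (((Reachable.map e.symm.toHom hr).mono le_rfl).mono le_rfl |>.mono le_rfl
        |> fun r => by simpa using r)
    rw [dist_eq_zero_of_not_reachable h, dist_eq_zero_of_not_reachable h']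


section Twin

variable [DecidableEq V] {G' : SimpleGraph V} {u v : V}

lemma swap_adj (htw : Twins G' u v) {a b : V} (hab : G'.Adj a b) :
    G'.Adj (Equiv.swap u v a) (Equiv.swap u v b) := by
  obtain ⟨hne, htwin⟩ := htw
  rcases eq_or_ne a u with rfl | hau
  · rcases eq_or_ne b a with rfl | hbu
    · exact absurd rfl hab.ne
    rcases eq_or_ne b v with rfl | hbv
    · rw [Equiv.swap_apply_left, Equiv.swap_apply_right]
      exact hab.symm
    · rw [Equiv.swap_apply_left, Equiv.swap_apply_of_ne_of_ne hbu hbv]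
      exact (htwin b hbu hbv).mp hab
  rcases eq_or_ne a v with rfl | hav
  · rcases eq_or_ne b u with rfl | hbu
    · rw [Equiv.swap_apply_left, Equiv.swap_apply_right]
      exact hab.symm
    rcases eq_or_ne b a with rfl | hbv
    · exact absurd rfl hab.ne
    · rw [Equiv.swap_apply_right, Equiv.swap_apply_of_ne_of_ne hbu hbv]
      exact (htwin b hbu hbv).mpr hab
  · rw [Equiv.swap_apply_of_ne_of_ne hau hav]
    rcases eq_or_ne b u with rfl | hbu
    · rw [Equiv.swap_apply_left]
      exact ((htwin a hau hav).mp hab.symm).symm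
    rcases eq_or_ne b v with rfl | hbv
    · rw [Equiv.swap_apply_right]
      exact ((htwin a hau hav).mpr hab.symm).symm
    · rw [Equiv.swap_apply_of_ne_of_ne hbu hbv]
      exact hab

def swapIso (htw : Twins G' u v) : G' ≃g G' where
  toEquiv := Equiv.swap u v
  map_rel_iff' := by
    intro a b
    constructor
    · intro h
      have h2 := swap_adj htw h
      rwa [Equiv.swap_apply_self, Equiv.swap_apply_self] at h2
    · exact swap_adj htw

lemma collapse_prop (htw : Twins G' u v) (a b : V) (hab : G'.Adj a b) :
    G'.Adj (if a = v then u else a) (if b = v then u else b) ∨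
      (if a = v then u else a) = (if b = v then u else b) := by
  obtain ⟨hne, htwin⟩ := htw
  rcases eq_or_ne a v with heq | hav
  · have hbv : b ≠ v := fun h => hab.ne (heq.trans h.symm)
    rw [if_pos heq, if_neg hbv]
    rcases eq_or_ne b u with heb | hbu
    · exact Or.inr heb.symm
    · exact Or.inl ((htwin b hbu hbv).mpr (show G'.Adj v b from heq ▸ hab))
  rcases eq_or_ne b v with heq | hbv
  · rw [if_neg hav, if_pos heq]
    rcases eq_or_ne a u with hea | hau
    · exact Or.inr hea
    · exact Or.inl ((htwin a hau hav).mpr (show G'.Adj v a from heq ▸ hab.symm)).symm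
  · rw [if_neg hav, if_neg hbv]
    exact Or.inl hab

lemma fz_notmem (htw : Twins G' u v) (z : V) : (if z = v then u else z) ≠ v := by
  rcases eq_or_ne z v with rfl | hzv
  · rw [if_pos rfl]; exact htw.1
  · rw [if_neg hzv]; exact hzv

lemma fz_mem {s : Set V} (hu : u ∈ s) {z : V} (hz : z ∈ s) : (if z = v then u else z) ∈ s := by
  rcases eq_or_ne z v with rfl | hzv
  · rw [if_pos rfl]; exact hu
  · rw [if_neg hzv]; exact hz

/-- distances don't change after deleting the twin `v`. -/
lemma dist_compl (htw : Twins G' u v) {x y : V} (hx : x ∈ ({v}ᶜ : Set V))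
    (hy : y ∈ ({v}ᶜ : Set V)) (hr : G'.Reachable x y) :
    (G'.induce {v}ᶜ).dist ⟨x, hx⟩ ⟨y, hy⟩ = G'.dist x y := by
  have hxv : x ≠ v := hx
  have hyv : y ≠ v := hy
  obtain ⟨p, hp⟩ := hr.exists_walk_length_eq_dist
  obtain ⟨q, hql, hqs⟩ := collapse_walk G' (fun w => if w = v then u else w)
    (collapse_prop htw) p
  have hq' : ∀ w ∈ q.support, w ∈ ({v}ᶜ : Set V) := by
    intro w hw
    obtain ⟨z, _, rfl⟩ := hqs w hw
    exact fz_notmem htw z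
  obtain ⟨q', hq'l⟩ := lift_walk G' {v}ᶜ (q.copy (by simp [hxv]) (by simp [hyv]))
    hx hy (by simpa [SimpleGraph.Walk.support_copy] using hq')
  apply le_antisymm
  · calc (G'.induce {v}ᶜ).dist ⟨x, hx⟩ ⟨y, hy⟩ ≤ q'.length := dist_le _
      _ ≤ G'.dist x y := by
          rw [hq'l, SimpleGraph.Walk.length_copy]
          exact hql.trans_eq hp
  · obtain ⟨r, hrl⟩ := Reachable.exists_walk_length_eq_dist ⟨q'⟩
    obtain ⟨r', hr'l, _⟩ := down_walk G' {v}ᶜ r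
    calc G'.dist x y ≤ r'.length := dist_le _
      _ = _ := by rw [hr'l, hrl]

lemma case1 (htw : Twins G' u v)
    (hDH : ∀ t : Set ↥({v}ᶜ : Set V), ((G'.induce {v}ᶜ).induce t).Connected →
      ∀ a b : t, ((G'.induce {v}ᶜ).induce t).dist a b = (G'.induce {v}ᶜ).dist a b)
    (s : Set V) (hv : v ∉ s) (hc : (G'.induce s).Connected)
    (x y : ↥s) : (G'.induce s).dist x y = G'.dist x.1 y.1 := by
  have hmem : ∀ a : ↥s, ((a : V) ∈ ({v}ᶜ : Set V)) := fun a h =>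
    hv (Set.mem_singleton_iff.mp h ▸ a.2)
  let t : Set ↥({v}ᶜ : Set V) := Subtype.val ⁻¹' s
  let e : (G'.induce s) ≃g ((G'.induce {v}ᶜ).induce t) :=
    { toFun := fun a => ⟨⟨a.1, hmem a⟩, a.2⟩
      invFun := fun b => ⟨b.1.1, b.2⟩
      left_inv := fun a => rfl
      right_inv := fun b => rfl
      map_rel_iff' := Iff.rfl }
  have hc' := (Iso.connected_iff e).mp hc
  have h1 := iso_dist_eq e x y
  have h2 := hDH t hc' (e x) (e y)
  have hr : G'.Reachable x.1 y.1 := by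
    obtain ⟨w⟩ := hc.preconnected x y
    obtain ⟨p, -, -⟩ := down_walk G' s w
    exact ⟨p⟩
  have h3 := dist_compl htw (hmem x) (hmem y) hr
  rw [← h1, h2]
  exact h3

lemma case2 (htw : Twins G' u v)
    (hDH : ∀ t : Set ↥({v}ᶜ : Set V), ((G'.induce {v}ᶜ).induce t).Connected →
      ∀ a b : t, ((G'.induce {v}ᶜ).induce t).dist a b = (G'.induce {v}ᶜ).dist a b)
    (s : Set V) (hv : v ∈ s) (hu : u ∉ s) (hc : (G'.induce s).Connected)
    (x y : ↥s) : (G'.induce s).dist x y = G'.dist x.1 y.1 := by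
  set s' : Set V := (Equiv.swap u v) '' s with hs'
  have hv' : v ∉ s' := by
    rintro ⟨a, ha, hav⟩
    have : a = u := by
      have := congrArg (Equiv.swap u v) hav
      rwa [Equiv.swap_apply_self, Equiv.swap_apply_right] at this
    exact hu (this ▸ ha)
  let e2 : (G'.induce s) ≃g (G'.induce s') :=
    { toEquiv := Equiv.image (Equiv.swap u v) s
      map_rel_iff' := fun {a b} => (swapIso htw).map_rel_iff }
  have h1 := iso_dist_eq e2 x y
  have h2 := case1 htw hDH s' hv' ((Iso.connected_iff e2).mp hc) (e2 x) (e2 y)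
  have h3 : G'.dist ((e2 x : ↥s') : V) ((e2 y : ↥s') : V) = G'.dist x.1 y.1 :=
    iso_dist_eq (swapIso htw) x.1 y.1
  rw [← h1, h2]
  exact h3

lemma case3 (htw : Twins G' u v)
    (hDH : ∀ t : Set ↥({v}ᶜ : Set V), ((G'.induce {v}ᶜ).induce t).Connected →
      ∀ a b : t, ((G'.induce {v}ᶜ).induce t).dist a b = (G'.induce {v}ᶜ).dist a b)
    (s : Set V) (hv : v ∈ s) (hu : u ∈ s) (hc : (G'.induce s).Connected)
    (x y : ↥s) : (G'.induce s).dist x y = G'.dist x.1 y.1 := by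
  have hS0 : v ∉ s \ {v} := fun h => h.2 rfl
  have hcon0 : (G'.induce (s \ {v})).Connected := by
    rw [connected_iff]
    constructor
    · intro a b
      obtain ⟨w⟩ := hc.preconnected ⟨a.1, a.2.1⟩ ⟨b.1, b.2.1⟩
      obtain ⟨p, -, hps⟩ := down_walk G' s w
      obtain ⟨q, -, hqs⟩ := collapse_walk G' (fun z => if z = v then u else z)
        (collapse_prop htw) p
      have ha' : (if (a : V) = v then u else (a : V)) = (a : V) := if_neg a.2.2
      have hb' : (if (b : V) = v then u else (b : V)) = (b : V) := if_neg b.2.2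
      obtain ⟨q', -⟩ := lift_walk G' (s \ {v}) (q.copy ha' hb') a.2 b.2 (by
        rw [SimpleGraph.Walk.support_copy]
        intro w hw
        obtain ⟨z, hz, rfl⟩ := hqs w hw
        exact ⟨fz_mem hu (hps z hz), fz_notmem htw z⟩)
      exact ⟨q'⟩
    · exact ⟨⟨u, hu, htw.1⟩⟩
  have key : ∀ (a b : ↥s), (a : V) ≠ v → (b : V) ≠ v →
      (G'.induce s).dist a b = G'.dist a.1 b.1 := by
    intro a b hav hbv
    have ha0 : (a : V) ∈ s \ {v} := ⟨a.2, hav⟩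
    have hb0 : (b : V) ∈ s \ {v} := ⟨b.2, hbv⟩
    have h1 := case1 htw hDH (s \ {v}) hS0 hcon0 ⟨a.1, ha0⟩ ⟨b.1, hb0⟩
    apply le_antisymm
    · rw [← h1]
      obtain ⟨p, hpl⟩ := Reachable.exists_walk_length_eq_dist
        (hcon0.preconnected ⟨a.1, ha0⟩ ⟨b.1, hb0⟩)
      obtain ⟨p', hp'l, hp's⟩ := down_walk G' (s \ {v}) p
      obtain ⟨q, hql⟩ := lift_walk G' s p' a.2 b.2 (fun w hw => (hp's w hw).1)
      calc (G'.induce s).dist a b ≤ q.length := dist_le _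
        _ = _ := by rw [hql, hp'l, hpl]
    · obtain ⟨w⟩ := hc.preconnected a b
      obtain ⟨r, hrl⟩ := Reachable.exists_walk_length_eq_dist (⟨w⟩ : (G'.induce s).Reachable a b)
      obtain ⟨r', hr'l, -⟩ := down_walk G' s r
      calc G'.dist a.1 b.1 ≤ r'.length := dist_le _
        _ = _ := by rw [hr'l, hrl]
  have hsmem : ∀ a : V, a ∈ s → Equiv.swap u v a ∈ s := by
    intro a ha
    rcases eq_or_ne a u with heq | hau
    · rw [heq, Equiv.swap_apply_left]; exact hv
    rcases eq_or_ne a v with heq | hav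
    · rw [heq, Equiv.swap_apply_right]; exact hu
    · rwa [Equiv.swap_apply_of_ne_of_ne hau hav]
  let es : (G'.induce s) ≃g (G'.induce s) :=
    { toFun := fun a => ⟨Equiv.swap u v a.1, hsmem a.1 a.2⟩
      invFun := fun a => ⟨Equiv.swap u v a.1, hsmem a.1 a.2⟩
      left_inv := fun a => Subtype.ext (Equiv.swap_apply_self _ _ _)
      right_inv := fun a => Subtype.ext (Equiv.swap_apply_self _ _ _)
      map_rel_iff' := fun {a b} => (swapIso htw).map_rel_iff }
  have keyv : ∀ (a b : ↥s), (a : V) = v → (b : V) ≠ v →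
      (G'.induce s).dist a b = G'.dist a.1 b.1 := by
    intro a b hav hbv
    rcases eq_or_ne (b : V) u with hbu | hbu
    · -- a.1 = v, b.1 = u : the twins themselves
      by_cases hadj : G'.Adj u v
      · have h1 : (G'.induce s).Adj a b := by
          show G'.Adj a.1 b.1
          rw [hav, hbu]
          exact hadj.symm
        rw [SimpleGraph.dist_eq_one_iff_adj.mpr h1,
          SimpleGraph.dist_eq_one_iff_adj.mpr (show G'.Adj a.1 b.1 from h1)]
      · have hne' : a ≠ b := fun h => htw.1 (by rw [← hbu, ← h, hav])
        obtain ⟨p⟩ := hc.preconnected a b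
        cases p with
        | nil => exact absurd rfl hne'
        | @cons _ c _ h q =>
          have hvc : G'.Adj v (c : V) := hav ▸ h
          have hcv : (c : V) ≠ v := hvc.ne'
          have hcu : (c : V) ≠ u := by
            intro hh
            exact hadj (by rw [← hh]; exact hvc.symm)
          have huc : G'.Adj u (c : V) := (htw.2 (c : V) hcu hcv).mpr hvc
          have hcb : (G'.induce s).Adj c b := by
            show G'.Adj c.1 b.1
            rw [hbu]
            exact huc.symm
          have hrS : (G'.induce s).Reachable a b := hc.preconnected a b
          have hrG : G'.Reachable a.1 b.1 := by
            obtain ⟨w⟩ := hrS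
            obtain ⟨p', -, -⟩ := down_walk G' s w
            exact ⟨p'⟩
          have hnadjS : ¬ (G'.induce s).Adj a b := by
            intro hh
            exact hadj (by rw [← hav, ← hbu]; exact (hh : G'.Adj a.1 b.1).symm)
          have hnadjG : ¬ G'.Adj a.1 b.1 := hnadjS
          have d1 : (G'.induce s).dist a b = 2 := by
            have hle : (G'.induce s).dist a b ≤ 2 :=
              dist_le (SimpleGraph.Walk.cons h (SimpleGraph.Walk.cons hcb SimpleGraph.Walk.nil))
            have hpos : 0 < (G'.induce s).dist a b := hrS.pos_dist_of_ne hne'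
            have hne1 : (G'.induce s).dist a b ≠ 1 := fun hh =>
              hnadjS (SimpleGraph.dist_eq_one_iff_adj.mp hh)
            omega
          have d2 : G'.dist a.1 b.1 = 2 := by
            have hac : G'.Adj a.1 c.1 := h
            have hcbG : G'.Adj c.1 b.1 := hcb
            have hle : G'.dist a.1 b.1 ≤ 2 :=
              dist_le (SimpleGraph.Walk.cons hac (SimpleGraph.Walk.cons hcbG SimpleGraph.Walk.nil))
            have hneG : a.1 ≠ b.1 := fun hh => hne' (Subtype.ext hh)
            have hpos : 0 < G'.dist a.1 b.1 := hrG.pos_dist_of_ne hneG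
            have hne1 : G'.dist a.1 b.1 ≠ 1 := fun hh =>
              hnadjG (SimpleGraph.dist_eq_one_iff_adj.mp hh)
            omega
          rw [d1, d2]
    · -- b.1 ∉ {u, v} : use the swap automorphism
      have h1 : ((es a : ↥s) : V) = u := by
        show Equiv.swap u v a.1 = u
        rw [hav, Equiv.swap_apply_right]
      have h2 : ((es b : ↥s) : V) = (b : V) := Equiv.swap_apply_of_ne_of_ne hbu hbv
      calc (G'.induce s).dist a b = (G'.induce s).dist (es a) (es b) := (iso_dist_eq es a b).symm
        _ = G'.dist ((es a : ↥s) : V) ((es b : ↥s) : V) :=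
            key _ _ (by rw [h1]; exact htw.1) (by rw [h2]; exact hbv)
        _ = G'.dist a.1 b.1 := iso_dist_eq (swapIso htw) a.1 b.1
  rcases eq_or_ne (x : V) v with hxv | hxv
  · rcases eq_or_ne (y : V) v with hyv | hyv
    · have hxy : x = y := Subtype.ext (hxv.trans hyv.symm)
      rw [hxy, SimpleGraph.dist_self, SimpleGraph.dist_self]
    · exact keyv x y hxv hyv
  · rcases eq_or_ne (y : V) v with hyv | hyv
    · rw [SimpleGraph.dist_comm, SimpleGraph.dist_comm (G := G')]
      exact keyv y x hyv hxv
    · exact key x y hxv hyv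

end Twin

end TwinAux

/-- distance-hereditary graphs are closed under twin addition: if `G'` has a
pair of twins `u, v` and deleting `v` yields a distance-hereditary graph, then `G'` is
distance-hereditary. -/
theorem stmt18 {V : Type*} (G' : SimpleGraph V) (u v : V) (htw : Twins G' u v)
    (hDH : DistanceHereditary (G'.induce {v}ᶜ)) :
    DistanceHereditary G' := by
  classical
  intro s hc x y
  by_cases hv : v ∈ s
  · by_cases hu : u ∈ s
    · exact TwinAux.case3 htw hDH s hv hu hc x y
    · exact TwinAux.case2 htw hDH s hv hu hc x y
  · exact TwinAux.case1 htw hDH s hv hc x y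
end
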